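/- arXiv:2408.04359 — 2 statements merged into one kernel-verified Lean document; each statement's English description precedes it below -/
import Mathlib

section
/- Let S ⊆ {1,…,p} be nonempty and let θ*_S ∈ ℝ^{|S|} satisfy the score equation ∑_{i=1}^n (b'(x_iᵀθ₀) − b'(x_{i,S}ᵀθ*_S))·x_{i,S} = 0, and suppose F = ∑_{i=1}^n b''(x_{i,S}ᵀθ*_S)·x_{i,S}x_{i,S}ᵀ is positive definite. Put V = ∑_{i=1}^n σ_i²·x_{i,S}x_{i,S}ᵀ and assume λ_max(F^{−1/2} V F^{−1/2}) ≤ C_mis for a constant C_mis > 0. Let ζ = max_{1≤i≤n} ‖F^{−1/2}x_{i,S}‖₂, σ_max = max_{1≤i≤n} σ_i, and ξ = F^{−1/2}∑_{i=1}^n ε_i·x_{i,S}. Then for every u ∈ ℝ^{|S|} with ‖u‖₂ ≤ t₀/(ζ·σ_max), one has log E[exp(uᵀξ)] ≤ (ν₀²·C_mis/2)·‖u‖₂². -/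
/-! With `a_i = uᵀ R x_{i,S}`, the exponent `uᵀ ξ` is the sum `∑ a_i ε_i` of independent terms,
so its log-moment generating function is the sum of those of the terms. Cauchy–Schwarz gives
`|σ_i a_i| ≤ σ_max ζ ‖u‖ ≤ t₀`, so the sub-exponential bound at `t = σ_i a_i` controls the
`i`-th term by `ν₀² σ_i² a_i² / 2`, and `∑ σ_i² a_i² = uᵀ R V R u ≤ C_mis ‖u‖²`. -/

open MeasureTheory ProbabilityTheory Matrix Real

/-- Largest eigenvalue of a symmetric real matrix, as the supremum of the Rayleigh quotient
over unit vectors. -/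
noncomputable def lamMax {m : Type*} [Fintype m] (A : Matrix m m ℝ) : ℝ :=
  sSup {r : ℝ | ∃ u : m → ℝ, (∑ i, u i ^ 2) = 1 ∧ r = u ⬝ᵥ A.mulVec u}

open Finset

section QuadraticForm

variable {m : Type*} [Fintype m]

lemma bddAbove_rayleigh (A : Matrix m m ℝ) :
    BddAbove {r : ℝ | ∃ u : m → ℝ, (∑ i, u i ^ 2) = 1 ∧ r = u ⬝ᵥ A *ᵥ u} := by
  have hsphere : IsCompact {u : m → ℝ | ∑ i, u i ^ 2 = 1} := by
    refine (isCompact_closedBall (0 : m → ℝ) 1).of_isClosed_subset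
      (isClosed_eq (by fun_prop) continuous_const) fun u hu => ?_
    rw [mem_closedBall_zero_iff, pi_norm_le_iff_of_nonneg zero_le_one]
    intro i
    rw [Real.norm_eq_abs, ← sq_le_one_iff_abs_le_one, ← hu]
    exact single_le_sum (fun j _ => sq_nonneg (u j)) (mem_univ i)
  obtain ⟨C, hC⟩ := hsphere.bddAbove_image (f := fun u => u ⬝ᵥ A *ᵥ u) (by fun_prop)
  exact ⟨C, fun r ⟨u, hu, hr⟩ => hr ▸ hC ⟨u, hu, rfl⟩⟩

lemma dotProduct_mulVec_le_lamMax_mul (A : Matrix m m ℝ) (u : m → ℝ) :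
    u ⬝ᵥ A *ᵥ u ≤ lamMax A * ∑ i, u i ^ 2 := by
  rcases eq_or_ne u 0 with rfl | hu
  · simp
  have hs : 0 < ∑ i, u i ^ 2 := by
    have hne : u ⬝ᵥ u ≠ 0 := dotProduct_self_eq_zero.not.2 hu
    simp only [dotProduct, ← sq] at hne
    exact (sum_nonneg fun i _ => sq_nonneg (u i)).lt_of_ne' hne
  set v := (√(∑ i, u i ^ 2))⁻¹ • u
  have hv : ∑ i, v i ^ 2 = 1 := by
    simp [v, mul_pow, ← mul_sum, sq_sqrt hs.le, hs.ne']
  have hvA : v ⬝ᵥ A *ᵥ v = (∑ i, u i ^ 2)⁻¹ * (u ⬝ᵥ A *ᵥ u) := by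
    simp only [v, mulVec_smul, dotProduct_smul, smul_dotProduct, smul_eq_mul, ← mul_assoc,
      ← sq, inv_pow, sq_sqrt hs.le]
  have hle := le_csSup (bddAbove_rayleigh A) ⟨v, hv, rfl⟩
  rwa [hvA, inv_mul_le_iff₀ hs, mul_comm] at hle

lemma dotProduct_mulVec_eq_sum_mul_sq {ι : Type*} [Fintype ι] {V : Matrix m m ℝ} {c : ι → ℝ}
    {y : ι → m → ℝ} (hV : ∀ j k, V j k = ∑ i, c i * y i j * y i k) (w : m → ℝ) :
    w ⬝ᵥ V *ᵥ w = ∑ i, c i * (w ⬝ᵥ y i) ^ 2 := by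
  simp only [dotProduct, mulVec, hV, sq, mul_sum, sum_mul]
  refine (Finset.sum_congr rfl fun j _ => Finset.sum_comm).trans ?_
  rw [Finset.sum_comm]
  refine Finset.sum_congr rfl fun i _ => Finset.sum_congr rfl fun j _ =>
    Finset.sum_congr rfl fun k _ => ?_
  ring

lemma sum_mul_sq_dotProduct_mulVec_eq {ι : Type*} [Fintype ι] {R V : Matrix m m ℝ} (hR : R.IsSymm)
    {c : ι → ℝ} {y : ι → m → ℝ} (hV : ∀ j k, V j k = ∑ i, c i * y i j * y i k) (u : m → ℝ) :
    ∑ i, c i * (u ⬝ᵥ R *ᵥ y i) ^ 2 = u ⬝ᵥ (R * V * R) *ᵥ u := by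
  rw [← mulVec_mulVec, ← mulVec_mulVec, dotProduct_mulVec, ← mulVec_transpose, hR.eq,
    dotProduct_mulVec_eq_sum_mul_sq hV]
  simp_rw [dotProduct_mulVec, ← mulVec_transpose, hR.eq]

lemma dotProduct_mulVec_sum_mul {ι : Type*} [Fintype ι] (u : m → ℝ) (R : Matrix m m ℝ)
    (e : ι → ℝ) (y : ι → m → ℝ) :
    u ⬝ᵥ R *ᵥ (fun k => ∑ i, e i * y i k) = ∑ i, e i * (u ⬝ᵥ R *ᵥ y i) := by
  have : (fun k => ∑ i, e i * y i k) = ∑ i, e i • y i := by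
    ext k; simp [Finset.sum_apply]
  simp [this, mulVec_sum, dotProduct_sum, mulVec_smul, dotProduct_smul]

lemma abs_dotProduct_le (f g : m → ℝ) : |f ⬝ᵥ g| ≤ √(∑ i, f i ^ 2) * √(∑ i, g i ^ 2) :=
  (abs_le_sqrt (sum_mul_sq_le_sq_mul_sq _ f g)).trans_eq (sqrt_mul (by positivity) _)

lemma abs_mul_dotProduct_le_of_le_div {σ σmax ζ t₀ : ℝ} {u y : m → ℝ} (hσ : 0 ≤ σ)
    (hσmax : σ ≤ σmax) (hy : √(∑ i, y i ^ 2) ≤ ζ) (hζσ : 0 ≤ ζ * σmax) (ht₀ : 0 ≤ t₀)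
    (hu : √(∑ i, u i ^ 2) ≤ t₀ / (ζ * σmax)) : |σ * (u ⬝ᵥ y)| ≤ t₀ :=
  calc |σ * (u ⬝ᵥ y)| = σ * |u ⬝ᵥ y| := by rw [abs_mul, abs_of_nonneg hσ]
    _ ≤ σmax * (√(∑ i, u i ^ 2) * ζ) := by
      refine mul_le_mul hσmax ?_ (abs_nonneg _) (hσ.trans hσmax)
      exact (abs_dotProduct_le _ _).trans (by gcongr)
    _ = √(∑ i, u i ^ 2) * (ζ * σmax) := by ring
    _ ≤ t₀ := mul_le_of_le_div₀ ht₀ hζσ hu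

end QuadraticForm

-- `log 0 = 0`, so a vanishing factor (e.g. the junk value of a non-integrable moment) is
-- harmless once the bounds `g i` are nonnegative.
lemma Real.log_prod_le_sum {ι : Type*} (s : Finset ι) {f g : ι → ℝ} (hg : ∀ i ∈ s, 0 ≤ g i)
    (hfg : ∀ i ∈ s, log (f i) ≤ g i) : log (∏ i ∈ s, f i) ≤ ∑ i ∈ s, g i := by
  by_cases hf : ∃ i ∈ s, f i = 0
  · obtain ⟨i, hi, hfi⟩ := hf
    rw [prod_eq_zero hi hfi, log_zero]
    exact sum_nonneg hg
  · push Not at hf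
    rw [log_prod hf]
    exact sum_le_sum hfg

section CumulantBounds

variable {Ω : Type*} [MeasurableSpace Ω] {μ : Measure Ω}

lemma log_integral_exp_sum_le {ι : Type*} [Fintype ι] {X : ι → Ω → ℝ}
    (hX : ∀ i, Measurable (X i)) (hindep : iIndepFun X μ) {g : ι → ℝ} (hg : ∀ i, 0 ≤ g i)
    (hXg : ∀ i, log (∫ ω, exp (X i ω) ∂μ) ≤ g i) :
    log (∫ ω, exp (∑ i, X i ω) ∂μ) ≤ ∑ i, g i := by
  have hmgf := hindep.mgf_sum hX univ (t := 1)
  simp only [mgf, one_mul, Finset.sum_apply] at hmgf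
  rw [hmgf]
  exact log_prod_le_sum _ (fun i _ => hg i) fun i _ => hXg i

lemma log_integral_exp_mul_le_of_standardized {ε : Ω → ℝ} {σ ν t₀ : ℝ} (hσ : σ ≠ 0)
    (hsub : ∀ t : ℝ, |t| ≤ t₀ → log (∫ ω, exp (t * (ε ω / σ)) ∂μ) ≤ ν ^ 2 * t ^ 2 / 2)
    {a : ℝ} (ha : |σ * a| ≤ t₀) :
    log (∫ ω, exp (a * ε ω) ∂μ) ≤ ν ^ 2 * (σ * a) ^ 2 / 2 := by
  convert hsub _ ha using 5 with ω
  field_simp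

end CumulantBounds

theorem stmt_2_general
    {Ω : Type*} [MeasurableSpace Ω] (μ : Measure Ω)
    (n p : ℕ)
    (x : Fin n → Fin p → ℝ) (θ₀ : Fin p → ℝ)
    -- the cumulant function
    (b : ℝ → ℝ)
    -- the responses: independent, mean `b'(x_iᵀθ₀)`, variance proxy `σ_i² = b''(x_iᵀθ₀) > 0`
    (Y : Fin n → Ω → ℝ) (hYmeas : ∀ i, Measurable (Y i))
    (hYindep : iIndepFun Y μ)
    (hσpos : ∀ i : Fin n, 0 < deriv (deriv b) (∑ j, x i j * θ₀ j))
    -- the sub-exponential assumption on the standardized errors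
    (ν₀ t₀ : ℝ) (ht₀ : 0 < t₀)
    (hsubexp : ∀ i : Fin n, ∀ t : ℝ, |t| ≤ t₀ →
      Real.log (∫ ω, Real.exp (t * ((Y i ω - deriv b (∑ j, x i j * θ₀ j)) /
          Real.sqrt (deriv (deriv b) (∑ j, x i j * θ₀ j)))) ∂μ)
        ≤ ν₀ ^ 2 * t ^ 2 / 2)
    -- the model `S`, the best coefficient `θs = θ*_S` solving the score equation
    (S : Finset (Fin p))
    -- the Fisher matrix `F` and the matrix `V`
    (V : Matrix S S ℝ)
    (hV : ∀ j k : S, V j k = ∑ i, deriv (deriv b) (∑ l, x i l * θ₀ l) * x i j.1 * x i k.1)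
    -- `R = F^{-1/2}`
    (R : Matrix S S ℝ) (hRpsd : R.PosSemidef)
    -- misspecification bound, `ζ = max_i ‖F^{-1/2} x_{i,S}‖₂`, `σ_max = max_i σ_i`
    (Cmis ζ σmax : ℝ)
    (hmis : lamMax (R * V * R) ≤ Cmis)
    (hζ : ζ = ⨆ i : Fin n, Real.sqrt (∑ j : S, (R.mulVec (fun l : S => x i l.1) j) ^ 2))
    (hσmax : σmax = ⨆ i : Fin n, Real.sqrt (deriv (deriv b) (∑ j, x i j * θ₀ j))) :
    ∀ u : S → ℝ, Real.sqrt (∑ j, u j ^ 2) ≤ t₀ / (ζ * σmax) →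
      Real.log (∫ ω, Real.exp (∑ j : S, u j * R.mulVec
          (fun k : S => ∑ i, (Y i ω - deriv b (∑ l, x i l * θ₀ l)) * x i k.1) j) ∂μ)
        ≤ ν₀ ^ 2 * Cmis / 2 * (∑ j, u j ^ 2) := by
  intro u hu
  set xS : Fin n → S → ℝ := fun i l => x i l.1
  set c : Fin n → ℝ := fun i => deriv (deriv b) (∑ j, x i j * θ₀ j)
  set ε : Fin n → Ω → ℝ := fun i ω => Y i ω - deriv b (∑ j, x i j * θ₀ j)
  set a : Fin n → ℝ := fun i => u ⬝ᵥ R *ᵥ xS i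
  have hσ_le : ∀ i, √(c i) ≤ σmax := fun i =>
    hσmax ▸ le_ciSup (f := fun i => √(c i)) (Set.finite_range _).bddAbove i
  have hζ_le : ∀ i, √(∑ j, (R *ᵥ xS i) j ^ 2) ≤ ζ := fun i =>
    hζ ▸ le_ciSup (f := fun i => √(∑ j, (R *ᵥ xS i) j ^ 2)) (Set.finite_range _).bddAbove i
  have hζσ : 0 ≤ ζ * σmax := by
    rw [hζ, hσmax]
    exact mul_nonneg (iSup_nonneg fun _ => sqrt_nonneg _) (iSup_nonneg fun _ => sqrt_nonneg _)
  have ht : ∀ i, |√(c i) * a i| ≤ t₀ := fun i =>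
    abs_mul_dotProduct_le_of_le_div (sqrt_nonneg _) (hσ_le i) (hζ_le i) hζσ ht₀.le hu
  calc log (∫ ω, exp (u ⬝ᵥ R *ᵥ fun k => ∑ i, ε i ω * xS i k) ∂μ)
      = log (∫ ω, exp (∑ i, a i * ε i ω) ∂μ) := by
        simp_rw [dotProduct_mulVec_sum_mul, mul_comm (ε _ _)]
        rfl
    _ ≤ ∑ i, ν₀ ^ 2 * (√(c i) * a i) ^ 2 / 2 :=
      log_integral_exp_sum_le (fun i => ((hYmeas i).sub_const _).const_mul _)
        (hYindep.comp (fun i y => a i * (y - deriv b (∑ j, x i j * θ₀ j))) fun i => by fun_prop)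
        (fun i => by positivity)
        fun i =>
          log_integral_exp_mul_le_of_standardized (sqrt_pos.2 (hσpos i)).ne' (hsubexp i) (ht i)
    _ = ν₀ ^ 2 / 2 * ∑ i, c i * a i ^ 2 := by
      have hσ_sq : ∀ i, √(c i) ^ 2 = c i := fun i => sq_sqrt (hσpos i).le
      simp_rw [mul_pow, hσ_sq, mul_sum]
      exact Finset.sum_congr rfl fun i _ => by ring
    _ = ν₀ ^ 2 / 2 * (u ⬝ᵥ (R * V * R) *ᵥ u) := by
      rw [← sum_mul_sq_dotProduct_mulVec_eq (isHermitian_iff_isSymm.1 hRpsd.1) hV]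
    _ ≤ ν₀ ^ 2 / 2 * (lamMax (R * V * R) * ∑ j, u j ^ 2) := by
      gcongr
      exact dotProduct_mulVec_le_lamMax_mul _ _
    _ ≤ ν₀ ^ 2 / 2 * (Cmis * ∑ j, u j ^ 2) := by gcongr
    _ = ν₀ ^ 2 * Cmis / 2 * ∑ j, u j ^ 2 := by ring

/-- exponential moment of the normalized score function under a
sub-exponential tail assumption. Here `R` plays the role of `F^{-1/2}`: it is the unique
positive semidefinite matrix with `R * F * R = 1`. -/
theorem stmt_2
    {Ω : Type*} [MeasurableSpace Ω] (μ : Measure Ω) [IsProbabilityMeasure μ]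
    (n p : ℕ) (hn : 1 ≤ n)
    (x : Fin n → Fin p → ℝ) (θ₀ : Fin p → ℝ)
    -- the cumulant function
    (b : ℝ → ℝ) (hb2 : ContDiff ℝ 2 b) (hbconv : StrictConvexOn ℝ Set.univ b)
    -- the responses: independent, mean `b'(x_iᵀθ₀)`, variance proxy `σ_i² = b''(x_iᵀθ₀) > 0`
    (Y : Fin n → Ω → ℝ) (hYmeas : ∀ i, Measurable (Y i))
    (hYindep : iIndepFun Y μ)
    (hmean : ∀ i : Fin n, ∫ ω, Y i ω ∂μ = deriv b (∑ j, x i j * θ₀ j))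
    (hσpos : ∀ i : Fin n, 0 < deriv (deriv b) (∑ j, x i j * θ₀ j))
    -- the sub-exponential assumption on the standardized errors
    (ν₀ t₀ : ℝ) (hν₀ : 0 < ν₀) (ht₀ : 0 < t₀)
    (hsubexp : ∀ i : Fin n, ∀ t : ℝ, |t| ≤ t₀ →
      Real.log (∫ ω, Real.exp (t * ((Y i ω - deriv b (∑ j, x i j * θ₀ j)) /
          Real.sqrt (deriv (deriv b) (∑ j, x i j * θ₀ j)))) ∂μ)
        ≤ ν₀ ^ 2 * t ^ 2 / 2)
    -- the model `S`, the best coefficient `θs = θ*_S` solving the score equation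
    (S : Finset (Fin p)) (hS : S.Nonempty)
    (θs : S → ℝ)
    (hscore : ∀ k : S, ∑ i,
        (deriv b (∑ j, x i j * θ₀ j) - deriv b (∑ j : S, x i j.1 * θs j)) * x i k.1 = 0)
    -- the Fisher matrix `F` and the matrix `V`
    (F V : Matrix S S ℝ)
    (hF : ∀ j k : S, F j k = ∑ i, deriv (deriv b) (∑ l : S, x i l.1 * θs l) * x i j.1 * x i k.1)
    (hV : ∀ j k : S, V j k = ∑ i, deriv (deriv b) (∑ l, x i l * θ₀ l) * x i j.1 * x i k.1)
    (hFpd : F.PosDef)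
    -- `R = F^{-1/2}`
    (R : Matrix S S ℝ) (hRpsd : R.PosSemidef) (hR : R * F * R = 1)
    -- misspecification bound, `ζ = max_i ‖F^{-1/2} x_{i,S}‖₂`, `σ_max = max_i σ_i`
    (Cmis ζ σmax : ℝ) (hCmis : 0 < Cmis)
    (hmis : lamMax (R * V * R) ≤ Cmis)
    (hζ : ζ = ⨆ i : Fin n, Real.sqrt (∑ j : S, (R.mulVec (fun l : S => x i l.1) j) ^ 2))
    (hσmax : σmax = ⨆ i : Fin n, Real.sqrt (deriv (deriv b) (∑ j, x i j * θ₀ j))) :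
    ∀ u : S → ℝ, Real.sqrt (∑ j, u j ^ 2) ≤ t₀ / (ζ * σmax) →
      Real.log (∫ ω, Real.exp (∑ j : S, u j * R.mulVec
          (fun k : S => ∑ i, (Y i ω - deriv b (∑ l, x i l * θ₀ l)) * x i k.1) j) ∂μ)
        ≤ ν₀ ^ 2 * Cmis / 2 * (∑ j, u j ^ 2) :=
  stmt_2_general μ n p x θ₀ b Y hYmeas hYindep hσpos ν₀ t₀ ht₀ hsubexp S V hV R hRpsd Cmis ζ σmax
    hmis hζ hσmax
end

section
/- Let β > 1, ω ∈ (0, 1/2), and θ₀ ∈ ℝ^p satisfy (√2/(1 − 2ω))·log β ≤ ‖θ₀‖₂. Then for each i ∈ {1,…,n}, P(exp(X_iᵀθ₀) ≥ β) ≥ ω, and moreover P(#{i ∈ {1,…,n} : exp(X_iᵀθ₀) ≥ β} ≥ ω·n/2) ≥ 1 − exp(−ω·n/12). -/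
/-!
Each row gives `X_iᵀθ₀ ∼ N(0, ‖θ₀‖²)`. The density of `N(0, v)` is at most `1 / √(2πv)` and the
law is symmetric, so `P(Z ≥ c) ≥ 1/2 - c / √(2πv)`; for `c = log β` the assumption on `‖θ₀‖`
makes this at least `ω`. The rows are independent, so the number of large predictors is
binomial with success probability `q ≥ ω`, and the Chernoff bound at `t = -log 2` gives
`P(count ≤ ωn/2) ≤ 2^(ωn/2) (1 - q/2)^n ≤ exp((log 2 - 1) ωn/2) ≤ exp(-ωn/12)`.
-/

open MeasureTheory ProbabilityTheory Real Set
open scoped NNReal ENNReal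

/-- The law of an `n × p` matrix with i.i.d. standard normal entries. -/
noncomputable def gaussMat (n p : ℕ) : Measure (Fin n → Fin p → ℝ) :=
  Measure.pi fun _ : Fin n => Measure.pi fun _ : Fin p => gaussianReal 0 1

lemma map_pi_gaussianReal_sum_mul {ι : Type*} [Fintype ι] (θ : ι → ℝ) :
    (Measure.pi fun _ : ι => gaussianReal 0 1).map (fun y => ∑ j, y j * θ j) =
      gaussianReal 0 (∑ j, θ j ^ 2).toNNReal := by
  let L : StrongDual ℝ (EuclideanSpace ℝ ι) := innerSL ℝ (WithLp.toLp 2 θ)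
  have hL : (fun y : ι → ℝ => ∑ j, y j * θ j) = L ∘ WithLp.toLp 2 := by
    ext y
    simp [L, PiLp.inner_apply, mul_comm]
  rw [hL, ← Measure.map_map (by fun_prop) (by fun_prop), map_pi_eq_stdGaussian,
    IsGaussian.map_eq_gaussianReal, integral_strongDual_stdGaussian, variance_dual_stdGaussian,
    innerSL_apply_norm, EuclideanSpace.real_norm_sq_eq]

lemma gaussianPDFReal_le (μ : ℝ) (v : ℝ≥0) (x : ℝ) :
    gaussianPDFReal μ v x ≤ (√(2 * π * v))⁻¹ := by
  rw [gaussianPDFReal_def]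
  refine mul_le_of_le_one_right (by positivity) (exp_le_one_iff.2 ?_)
  exact div_nonpos_of_nonpos_of_nonneg (neg_nonpos.2 (sq_nonneg _)) (by positivity)

lemma measureReal_gaussianReal_le_mul_volume (μ : ℝ) {v : ℝ≥0} (hv : v ≠ 0) {s : Set ℝ}
    (hs : volume s ≠ ∞) :
    (gaussianReal μ v).real s ≤ (√(2 * π * v))⁻¹ * volume.real s := by
  rw [measureReal_def, gaussianReal_apply_eq_integral μ hv,
    ENNReal.toReal_ofReal (integral_nonneg fun x => gaussianPDFReal_nonneg μ v x)]
  calc ∫ x in s, gaussianPDFReal μ v x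
      ≤ ∫ _ in s, (√(2 * π * v))⁻¹ :=
        setIntegral_mono (integrable_gaussianPDFReal μ v).integrableOn
          (integrableOn_const hs) (gaussianPDFReal_le μ v)
    _ = _ := by rw [setIntegral_const, smul_eq_mul, mul_comm]

lemma gaussianReal_Iic_neg_eq_Ici (v : ℝ≥0) (c : ℝ) :
    gaussianReal 0 v (Iic (-c)) = gaussianReal 0 v (Ici c) := by
  conv_rhs =>
    rw [← neg_zero, ← gaussianReal_map_neg, Measure.map_apply measurable_neg measurableSet_Ici]
  simp

lemma sub_div_le_measureReal_gaussianReal_Ici {v : ℝ≥0} (hv : v ≠ 0) {c : ℝ} (hc : 0 ≤ c) :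
    1 / 2 - c / √(2 * π * v) ≤ (gaussianReal 0 v).real (Ici c) := by
  set P := gaussianReal 0 v
  have hcover : (1 : ℝ) ≤ P.real (Iic (-c)) + P.real (Ioo (-c) c) + P.real (Ici c) := by
    have : univ ⊆ Iic (-c) ∪ Ioo (-c) c ∪ Ici c := by
      intro x _
      rcases le_or_gt x (-c) with h | h
      · exact Or.inl (Or.inl h)
      rcases lt_or_ge x c with h' | h'
      · exact Or.inl (Or.inr ⟨h, h'⟩)
      · exact Or.inr h'
    calc (1 : ℝ) = P.real univ := probReal_univ.symm
      _ ≤ _ := (measureReal_mono this).trans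
        ((measureReal_union_le _ _).trans (add_le_add_left (measureReal_union_le _ _) _))
  have hsymm : P.real (Iic (-c)) = P.real (Ici c) := by
    simp only [measureReal_def, P, gaussianReal_Iic_neg_eq_Ici]
  have hmiddle : P.real (Ioo (-c) c) ≤ (√(2 * π * v))⁻¹ * (2 * c) := by
    refine (measureReal_gaussianReal_le_mul_volume 0 hv measure_Ioo_lt_top.ne).trans_eq ?_
    rw [Real.volume_real_Ioo_of_le (by linarith)]
    ring
  rw [div_eq_mul_inv c]
  linarith

lemma le_half_sub_div_sqrt {ω c V : ℝ} (hc : 0 < c) (hω : ω < 1 / 2)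
    (h : √2 / (1 - 2 * ω) * c ≤ √V) : ω ≤ 1 / 2 - c / √(2 * π * V) := by
  have h2ω : 0 < 1 - 2 * ω := by linarith
  have hsV : 0 < √V := lt_of_lt_of_le (by positivity) h
  have hV : 0 < V := sqrt_pos.1 hsV
  have h1 : √2 * c ≤ (1 - 2 * ω) * √V := by
    rwa [div_mul_eq_mul_div, div_le_iff₀ h2ω, mul_comm √V] at h
  have h2 : √2 * √V ≤ √(2 * π * V) := by
    rw [← sqrt_mul zero_le_two]
    gcongr
    nlinarith [pi_gt_three]
  have h3 : c / √(2 * π * V) ≤ (1 - 2 * ω) / 2 := by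
    rw [div_le_div_iff₀ (by positivity) two_pos]
    nlinarith [sq_sqrt (zero_le_two : (0 : ℝ) ≤ 2), sqrt_nonneg 2]
  linarith

lemma le_measureReal_pi_gaussianReal_exp_ge {ι : Type*} [Fintype ι] {β ω : ℝ} (hβ : 1 < β)
    (hω : ω < 1 / 2) {θ : ι → ℝ} (h : √2 / (1 - 2 * ω) * log β ≤ √(∑ j, θ j ^ 2)) :
    ω ≤ (Measure.pi fun _ : ι => gaussianReal 0 1).real {y | β ≤ exp (∑ j, y j * θ j)} := by
  have hc : 0 < log β := log_pos hβ
  have h2ω : 0 < 1 - 2 * ω := by linarith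
  have hV : 0 < ∑ j, θ j ^ 2 := sqrt_pos.1 <| lt_of_lt_of_le (by positivity) h
  have hset : {y : ι → ℝ | β ≤ exp (∑ j, y j * θ j)} =
      (fun y => ∑ j, y j * θ j) ⁻¹' Ici (log β) := by
    ext y
    exact (log_le_iff_le_exp (zero_lt_one.trans hβ)).symm
  rw [hset, ← map_measureReal_apply (by fun_prop) measurableSet_Ici,
    map_pi_gaussianReal_sum_mul]
  refine (le_half_sub_div_sqrt hc hω ?_).trans
    (sub_div_le_measureReal_gaussianReal_Ici (by simpa using hV) hc.le)
  rwa [Real.coe_toNNReal _ hV.le]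

section Binomial

variable {α ι : Type*} [Fintype ι] (A : Set α) [DecidablePred (· ∈ A)]

def countMem (x : ι → α) : ℕ := (Finset.univ.filter fun i => x i ∈ A).card

lemma countMem_eq_sum_indicator (x : ι → α) :
    (countMem A x : ℝ) = ∑ i, A.indicator 1 (x i) := by
  simp [countMem, Set.indicator_apply, Finset.sum_boole]

variable {A} [MeasurableSpace α] {μ : Measure α} [IsProbabilityMeasure μ]

lemma measurable_countMem (hA : MeasurableSet A) :
    Measurable fun x : ι → α => (countMem A x : ℝ) := by
  simp_rw [countMem_eq_sum_indicator]
  exact Finset.measurable_sum _ fun i _ =>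
    (measurable_const.indicator hA).comp (measurable_pi_apply i)

lemma mgf_countMem_pi (hA : MeasurableSet A) (t : ℝ) :
    mgf (fun x : ι → α => (countMem A x : ℝ)) (Measure.pi fun _ => μ) t =
      (1 + (exp t - 1) * μ.real A) ^ Fintype.card ι := by
  have hexp : ∀ y, exp (t * A.indicator 1 y) = 1 + (exp t - 1) * A.indicator 1 y := by
    intro y
    by_cases hy : y ∈ A <;> simp [hy]
  have hcoord : ∫ y, exp (t * A.indicator 1 y) ∂μ = 1 + (exp t - 1) * μ.real A := by
    simp_rw [hexp]
    rw [integral_add (integrable_const _) (((integrable_const 1).indicator hA).const_mul _),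
      integral_const_mul, integral_indicator_one hA]
    simp
  simp_rw [mgf, countMem_eq_sum_indicator, Finset.mul_sum, exp_sum]
  rw [integral_fintype_prod_eq_prod (fun _ y => exp (t * A.indicator 1 y)), hcoord,
    Finset.prod_const, Finset.card_univ]

lemma measureReal_countMem_le_exp (hA : MeasurableSet A) {ω : ℝ} (hω : 0 ≤ ω)
    (hq : ω ≤ μ.real A) :
    (Measure.pi fun _ : ι => μ).real {x | (countMem A x : ℝ) ≤ ω * Fintype.card ι / 2} ≤
      exp (-(ω * Fintype.card ι) / 12) := by
  set n := Fintype.card ι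
  set q := μ.real A
  have ht : -log 2 ≤ 0 := neg_nonpos.2 (log_nonneg one_le_two)
  have hint : Integrable (fun x : ι → α => exp (-log 2 * countMem A x))
      (Measure.pi fun _ => μ) := by
    refine .of_bound ((measurable_countMem hA).const_mul _).exp.aestronglyMeasurable 1
      (ae_of_all _ fun x => ?_)
    rw [norm_of_nonneg (exp_nonneg _), exp_le_one_iff]
    exact mul_nonpos_of_nonpos_of_nonneg ht (Nat.cast_nonneg _)
  refine (measure_le_le_exp_mul_mgf _ ht hint).trans ?_
  rw [mgf_countMem_pi hA]
  have hq1 : q ≤ 1 := measureReal_le_one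
  calc exp (- -log 2 * (ω * n / 2)) * (1 + (exp (-log 2) - 1) * q) ^ n
      = exp (log 2 * (ω * n / 2)) * (1 - q / 2) ^ n := by
        rw [exp_neg, exp_log two_pos]
        ring_nf
    _ ≤ exp (log 2 * (ω * n / 2)) * exp (-(q / 2)) ^ n := by
        gcongr
        · linarith
        · linarith [add_one_le_exp (-(q / 2))]
    _ = exp (log 2 * (ω * n / 2) - q * n / 2) := by
        rw [← exp_nat_mul, ← exp_add]
        ring_nf
    _ ≤ exp (-(ω * n) / 12) := by
        gcongr
        nlinarith [log_two_lt_d9, mul_le_mul_of_nonneg_right hq n.cast_nonneg,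
          mul_nonneg hω n.cast_nonneg]

lemma one_sub_exp_le_measure_le_countMem (hA : MeasurableSet A) {ω : ℝ} (hω : 0 ≤ ω)
    (hq : ω ≤ μ.real A) :
    1 - ENNReal.ofReal (exp (-(ω * Fintype.card ι) / 12)) ≤
      Measure.pi (fun _ : ι => μ) {x | ω * Fintype.card ι / 2 ≤ (countMem A x : ℝ)} := by
  set P := Measure.pi fun _ : ι => μ
  set m := ω * Fintype.card ι / 2
  have hmeas : MeasurableSet {x : ι → α | (countMem A x : ℝ) ≤ m} :=
    measurableSet_le (measurable_countMem hA) measurable_const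
  calc 1 - ENNReal.ofReal (exp (-(ω * Fintype.card ι) / 12))
      ≤ 1 - P {x | (countMem A x : ℝ) ≤ m} := by
        gcongr
        rw [← ofReal_measureReal]
        exact ENNReal.ofReal_le_ofReal (measureReal_countMem_le_exp hA hω hq)
    _ = P {x | (countMem A x : ℝ) ≤ m}ᶜ := (prob_compl_eq_one_sub hmeas).symm
    _ ≤ P {x | m ≤ (countMem A x : ℝ)} :=
        measure_mono fun _ hx => (not_le.1 (Set.notMem_ofPred_iff.1 hx)).le

end Binomial

theorem stmt_12_general (n p : ℕ)
    (β ω : ℝ) (hβ : 1 < β) (hω : 0 < ω) (hω2 : ω < 1 / 2)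
    (θ₀ : Fin p → ℝ)
    (hcond : Real.sqrt 2 / (1 - 2 * ω) * Real.log β ≤ Real.sqrt (∑ j, θ₀ j ^ 2)) :
    (∀ i : Fin n,
      ENNReal.ofReal ω ≤ gaussMat n p {x | β ≤ Real.exp (∑ j, x i j * θ₀ j)}) ∧
    1 - ENNReal.ofReal (Real.exp (-(ω * n) / 12)) ≤
      gaussMat n p {x | ω * n / 2 ≤
        ((Finset.univ.filter fun i : Fin n => β ≤ Real.exp (∑ j, x i j * θ₀ j)).card : ℝ)} := by
  set ν := Measure.pi fun _ : Fin p => gaussianReal 0 1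
  set A := {y : Fin p → ℝ | β ≤ exp (∑ j, y j * θ₀ j)}
  have hA : MeasurableSet A := measurableSet_le measurable_const (by fun_prop)
  have hrow : ω ≤ ν.real A := le_measureReal_pi_gaussianReal_exp_ge hβ hω2 hcond
  refine ⟨fun i => ?_, ?_⟩
  · exact (ENNReal.ofReal_le_of_le_toReal hrow).trans_eq
      ((measurePreserving_eval (fun _ => ν) i).measure_preimage hA.nullMeasurableSet).symm
  · have := one_sub_exp_le_measure_le_countMem (ι := Fin n) hA hω.le hrow
    rwa [Fintype.card_fin] at this

/-- lower bound on the probability that many linear predictors are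
large. -/
theorem stmt_12 (n p : ℕ) (hn : 1 ≤ n) (hp : 1 ≤ p)
    (β ω : ℝ) (hβ : 1 < β) (hω : 0 < ω) (hω2 : ω < 1 / 2)
    (θ₀ : Fin p → ℝ)
    (hcond : Real.sqrt 2 / (1 - 2 * ω) * Real.log β ≤ Real.sqrt (∑ j, θ₀ j ^ 2)) :
    (∀ i : Fin n,
      ENNReal.ofReal ω ≤ gaussMat n p {x | β ≤ Real.exp (∑ j, x i j * θ₀ j)}) ∧
    1 - ENNReal.ofReal (Real.exp (-(ω * n) / 12)) ≤
      gaussMat n p {x | ω * n / 2 ≤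
        ((Finset.univ.filter fun i : Fin n => β ≤ Real.exp (∑ j, x i j * θ₀ j)).card : ℝ)} :=
  stmt_12_general n p β ω hβ hω hω2 θ₀ hcond
end
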